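/- arXiv:1405.6487 — 10 statements merged into one kernel-verified Lean document; each statement's English description precedes it below -/
import Mathlib

section
/- Let r₁ and r₂ be rational numbers with 0 < r₁ ≤ r₂ < 1 and r₁ + r₂ ≤ 1. Then for every rational number r with 0 < r < 1, the triple (1-r₁, 1-r₂, 1-r) is not realizable. (This is the statement that the Seifert fibered space S²(-2, r₁, r₂, r) is an L-space for every 0 < r < 1.) -/
/-!
In a realizable triple the two largest entries are bounded by `a/k` and `(k-a)/k`, so they sum
to less than `1`; hence the sum of the triple is less than `1` plus any of its entries. For the
triple `(1 - r₁, 1 - r₂, 1 - r)` the sum exceeds `1 - r` by `2 - r₁ - r₂ ≥ 1`.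
-/

/-- A triple of rationals is *realizable* if there exist relatively prime positive
integers `a`, `k` with `0 < a ≤ k/2` such that the increasing rearrangement
`(t₁, t₂, t₃)` of `(s₁, s₂, s₃)` satisfies `t₁ < 1/k`, `t₂ < a/k`, `t₃ < (k-a)/k`. -/
def Realizable (s₁ s₂ s₃ : ℚ) : Prop :=
  ∃ a k : ℕ, 0 < a ∧ 2 * a ≤ k ∧ Nat.Coprime a k ∧
    ∃ t₁ t₂ t₃ : ℚ, ({t₁, t₂, t₃} : Multiset ℚ) = ({s₁, s₂, s₃} : Multiset ℚ) ∧
      t₁ ≤ t₂ ∧ t₂ ≤ t₃ ∧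
      t₁ < 1 / (k : ℚ) ∧ t₂ < (a : ℚ) / k ∧ t₃ < ((k : ℚ) - (a : ℚ)) / k

theorem Realizable.add_add_lt_one_add {s₁ s₂ s₃ : ℚ} (h : Realizable s₁ s₂ s₃) :
    s₁ + s₂ + s₃ < 1 + s₃ := by
  obtain ⟨a, k, ha, hak, -, t₁, t₂, t₃, hts, h₁₂, h₂₃, -, ht₂, ht₃⟩ := h
  have hk : (k : ℚ) ≠ 0 := by exact_mod_cast (by omega : k ≠ 0)
  have hsum : t₁ + t₂ + t₃ = s₁ + s₂ + s₃ := by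
    simpa [add_assoc] using congrArg Multiset.sum hts
  have hmem : s₃ ∈ ({t₁, t₂, t₃} : Multiset ℚ) := by rw [hts]; simp
  have ht₁ : t₁ ≤ s₃ := by
    simp only [Multiset.insert_eq_cons, Multiset.mem_cons, Multiset.mem_singleton] at hmem
    rcases hmem with rfl | rfl | rfl <;> linarith
  have hone : (a : ℚ) / k + ((k : ℚ) - a) / k = 1 := by field_simp; ring
  linarith

theorem lspace_minus_two_general (r₁ r₂ : ℚ)
    (hsum : r₁ + r₂ ≤ 1) :
    ∀ r : ℚ, 0 < r → r < 1 → ¬ Realizable (1 - r₁) (1 - r₂) (1 - r) := by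
  intro r _ _ h
  linarith [h.add_add_lt_one_add]

/-- If `0 < r₁ ≤ r₂ < 1` and `r₁ + r₂ ≤ 1`, then for every rational `r` with
`0 < r < 1` the triple `(1-r₁, 1-r₂, 1-r)` is not realizable. -/
theorem lspace_minus_two (r₁ r₂ : ℚ) (h₁ : 0 < r₁) (h₁₂ : r₁ ≤ r₂) (h₂ : r₂ < 1)
    (hsum : r₁ + r₂ ≤ 1) :
    ∀ r : ℚ, 0 < r → r < 1 → ¬ Realizable (1 - r₁) (1 - r₂) (1 - r) :=
  lspace_minus_two_general r₁ r₂ hsum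
end

section
/- Let r₁ and r₂ be rational numbers with 0 < r₁ ≤ r₂ < 1. Then there exists a rational number ε > 0 such that for every rational number r with 0 < r ≤ ε, the triple (1-r₁, 1-r₂, 1-r) is not realizable. (This is the statement that there exists ε > 0 such that S²(-2, r₁, r₂, r) is an L-space for all rational r with 0 < r ≤ ε.) -/
/-- If `0 < r₁ ≤ r₂ < 1`, then there exists `ε > 0` such that for every rational
`r` with `0 < r ≤ ε` the triple `(1-r₁, 1-r₂, 1-r)` is not realizable. -/
theorem lspace_minus_two_small (r₁ r₂ : ℚ) (h₁ : 0 < r₁) (h₁₂ : r₁ ≤ r₂) (h₂ : r₂ < 1) :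
    ∃ ε : ℚ, 0 < ε ∧ ∀ r : ℚ, 0 < r → r ≤ ε →
      ¬ Realizable (1 - r₁) (1 - r₂) (1 - r) := by
  refine ⟨(1 - r₂) / 2, by linarith, ?_⟩
  intro r hr hre
  rintro ⟨a, k, ha, hak, -, t₁, t₂, t₃, hmul, h12, h23, ht1, ht2, ht3⟩
  have hk2 : 2 ≤ k := le_trans (by omega) hak
  have hkQ : (0 : ℚ) < k := by exact_mod_cast Nat.lt_of_lt_of_le (by norm_num) hk2
  have hakN : (2 * a : ℚ) ≤ k := by exact_mod_cast hak
  have hakQ : (a : ℚ) / k ≤ 1 / 2 := by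
    rw [div_le_div_iff₀ hkQ (by norm_num)]; linarith
  have hr2 : r < 1 / 2 := by linarith
  -- rewrite (k-a)/k as 1 - a/k
  rw [sub_div, div_self hkQ.ne'] at ht3
  -- 1 - r must be t₃
  have hmem : (1 - r) ∈ ({t₁, t₂, t₃} : Multiset ℚ) := by rw [hmul]; simp
  simp only [Multiset.insert_eq_cons, Multiset.mem_cons, Multiset.mem_singleton] at hmem
  have h3 : 1 - r = t₃ := by
    rcases hmem with h | h | h
    · linarith
    · linarith
    · exact h
  rw [← h3] at ht3 h23 hmul
  have hka : (a : ℚ) / k < r := by linarith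
  -- cancel 1 - r from the multiset equation
  have e1 : ({t₁, t₂, 1 - r} : Multiset ℚ) = (1 - r) ::ₘ {t₁, t₂} := by
    simp only [Multiset.insert_eq_cons]
    rw [← Multiset.cons_zero (1 - r), ← Multiset.cons_zero t₂,
      Multiset.cons_swap t₂, Multiset.cons_swap t₁]
  have e2 : ({1 - r₁, 1 - r₂, 1 - r} : Multiset ℚ) = (1 - r) ::ₘ {1 - r₁, 1 - r₂} := by
    simp only [Multiset.insert_eq_cons]
    rw [← Multiset.cons_zero (1 - r), ← Multiset.cons_zero (1 - r₂),
      Multiset.cons_swap (1 - r₂), Multiset.cons_swap (1 - r₁)]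
  rw [e1, e2] at hmul
  have key : ({t₁, t₂} : Multiset ℚ) = {1 - r₁, 1 - r₂} :=
    (Multiset.cons_inj_right _).mp hmul
  have hmem1 : (1 - r₁) ∈ ({t₁, t₂} : Multiset ℚ) := by rw [key]; simp
  simp only [Multiset.insert_eq_cons, Multiset.mem_cons, Multiset.mem_singleton] at hmem1
  have h1t2 : 1 - r₁ ≤ t₂ := by rcases hmem1 with h | h <;> linarith
  linarith
end

section
/- Let r₁ and r₂ be rational numbers with 0 < r₁ ≤ r₂ < 1. Then there exists a rational number ε > 0 such that for every rational number s with 1 - ε ≤ s < 1, the triple (r₁, r₂, s) is not realizable. (This is the statement that there exists ε > 0 such that S²(0, r₁, r₂, r) = S²(-1, r₁, r₂, r+1) is an L-space for all rational r with -ε ≤ r < 0.) -/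
/-- If `0 < r₁ ≤ r₂ < 1`, then there exists `ε > 0` such that for every rational
`s` with `1 - ε ≤ s < 1` the triple `(r₁, r₂, s)` is not realizable. -/
theorem lspace_zero_near_one (r₁ r₂ : ℚ) (h₁ : 0 < r₁) (h₁₂ : r₁ ≤ r₂) (h₂ : r₂ < 1) :
    ∃ ε : ℚ, 0 < ε ∧ ∀ s : ℚ, 1 - ε ≤ s → s < 1 → ¬ Realizable r₁ r₂ s := by
  refine ⟨min r₁ (1 - r₂), lt_min h₁ (by linarith), ?_⟩
  rintro s hs hs1 ⟨a, k, ha, hak, -, t₁, t₂, t₃, hm, h12, h23, ht₁, ht₂, ht₃⟩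
  have hk : 2 ≤ k := by omega
  have ha1 : (1 : ℚ) ≤ (a : ℚ) := by exact_mod_cast ha
  have hkq : (2 : ℚ) ≤ (k : ℚ) := by exact_mod_cast hk
  have hkpos : (0 : ℚ) < (k : ℚ) := by linarith
  have hεr : min r₁ (1 - r₂) ≤ r₁ := min_le_left _ _
  have hεr2 : min r₁ (1 - r₂) ≤ 1 - r₂ := min_le_right _ _
  have hsr2 : r₂ ≤ s := by linarith
  have hs1r : 1 - r₁ ≤ s := by linarith
  have hsmem : s ∈ ({t₁, t₂, t₃} : Multiset ℚ) := by rw [hm]; simp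
  have hst : s ≤ t₃ := by
    simp only [Multiset.insert_eq_cons, Multiset.mem_cons, Multiset.mem_singleton] at hsmem
    rcases hsmem with h | h | h <;> linarith
  have ht1mem : t₁ ∈ ({r₁, r₂, s} : Multiset ℚ) := by rw [← hm]; simp
  have hrt : r₁ ≤ t₁ := by
    simp only [Multiset.insert_eq_cons, Multiset.mem_cons, Multiset.mem_singleton] at ht1mem
    rcases ht1mem with h | h | h <;> linarith
  have h1 : r₁ * (k : ℚ) < 1 := (lt_div_iff₀ hkpos).mp (lt_of_le_of_lt hrt ht₁)
  have h2 : s * (k : ℚ) < (k : ℚ) - (a : ℚ) := (lt_div_iff₀ hkpos).mp (lt_of_le_of_lt hst ht₃)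
  nlinarith [mul_le_mul_of_nonneg_right hs1r (le_of_lt hkpos)]
end

section
/- Let r₁, r₂, r∞ be rational numbers with 0 < r₁ ≤ r₂ < 1 and 0 < r∞ < 1, and suppose the triple (1-r₁, 1-r₂, 1-r∞) is realizable. Then there exists a rational number ε > 0 such that for every rational number r with r∞ - ε < r < 1, the triple (1-r₁, 1-r₂, 1-r) is realizable. (This is the statement that if S²(-2, r₁, r₂, r∞) is not an L-space, then S²(-2, r₁, r₂, r) is not an L-space for any rational r with r∞ - ε < r < 1.) -/
namespace Multiset

variable {α : Type*}

theorem triple_eq_triple_cases {a b c x y z : α} (h : ({a, b, c} : Multiset α) = {x, y, z}) :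
    (a = x ∧ b = y ∧ c = z) ∨ (a = x ∧ b = z ∧ c = y) ∨ (a = y ∧ b = x ∧ c = z) ∨
      (a = y ∧ b = z ∧ c = x) ∨ (a = z ∧ b = x ∧ c = y) ∨ (a = z ∧ b = y ∧ c = x) := by
  simp only [insert_eq_cons, cons_eq_cons, singleton_eq_cons_iff] at h
  aesop

theorem exists_sorted_triple [LinearOrder α] (x y z : α) :
    ∃ a b c : α, ({a, b, c} : Multiset α) = {x, y, z} ∧ a ≤ b ∧ b ≤ c := by
  obtain ⟨a, b, c, hl⟩ : ∃ a b c, ({x, y, z} : Multiset α).sort (· ≤ ·) = [a, b, c] :=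
    List.length_eq_three.mp (by simp)
  have hsorted := pairwise_sort ({x, y, z} : Multiset α) (· ≤ ·)
  have hperm := sort_eq ({x, y, z} : Multiset α) (· ≤ ·)
  rw [hl] at hsorted hperm
  exact ⟨a, b, c, hperm, by simp_all⟩

end Multiset

section Median

variable {α : Type*} [LinearOrder α]

def median (x y z : α) : α := max (min x y) (min (max x y) z)

theorem median_lt_median {x y z x' y' z' : α} (hx : x < x') (hy : y < y') (hz : z < z') :
    median x y z < median x' y' z' :=
  max_lt_max (min_lt_min hx hy) (min_lt_min (max_lt_max hx hy) hz)

theorem median_add_right [Add α] [AddRightMono α] (x y z c : α) :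
    median (x + c) (y + c) (z + c) = median x y z + c := by
  simp only [median, min_add_add_right, max_add_add_right]

theorem sorted_triple_eq {a b c x y z : α} (h : ({a, b, c} : Multiset α) = {x, y, z})
    (hab : a ≤ b) (hbc : b ≤ c) :
    a = min x (min y z) ∧ b = median x y z ∧ c = max x (max y z) := by
  rcases Multiset.triple_eq_triple_cases h with
    ⟨rfl, rfl, rfl⟩ | ⟨rfl, rfl, rfl⟩ | ⟨rfl, rfl, rfl⟩ | ⟨rfl, rfl, rfl⟩ | ⟨rfl, rfl, rfl⟩ |
      ⟨rfl, rfl, rfl⟩ <;>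
  simp only [median, min_def, max_def] <;> split_ifs <;> refine ⟨?_, ?_, ?_⟩ <;> order

end Median

theorem realizable_iff {x y z : ℚ} :
    Realizable x y z ↔ ∃ a k : ℕ, 0 < a ∧ 2 * a ≤ k ∧ Nat.Coprime a k ∧
      min x (min y z) < 1 / (k : ℚ) ∧ median x y z < (a : ℚ) / k ∧
      max x (max y z) < ((k : ℚ) - a) / k := by
  constructor
  · rintro ⟨a, k, ha, hak, hcop, t₁, t₂, t₃, ht, h₁₂, h₂₃, h₁, h₂, h₃⟩
    obtain ⟨rfl, rfl, rfl⟩ := sorted_triple_eq ht h₁₂ h₂₃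
    exact ⟨a, k, ha, hak, hcop, h₁, h₂, h₃⟩
  · rintro ⟨a, k, ha, hak, hcop, h₁, h₂, h₃⟩
    obtain ⟨t₁, t₂, t₃, ht, h₁₂, h₂₃⟩ := Multiset.exists_sorted_triple x y z
    obtain ⟨rfl, rfl, rfl⟩ := sorted_triple_eq ht h₁₂ h₂₃
    exact ⟨a, k, ha, hak, hcop, _, _, _, ht, h₁₂, h₂₃, h₁, h₂, h₃⟩

theorem Realizable.exists_forall_lt_add {x y z : ℚ} (h : Realizable x y z) :
    ∃ ε > 0, ∀ w < z + ε, Realizable x y w := by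
  obtain ⟨a, k, ha, hak, hcop, h₁, h₂, h₃⟩ := realizable_iff.mp h
  set ε := min (1 / (k : ℚ) - min x (min y z))
    (min ((a : ℚ) / k - median x y z) (((k : ℚ) - a) / k - max x (max y z)))
  have hε : 0 < ε := lt_min (sub_pos.2 h₁) (lt_min (sub_pos.2 h₂) (sub_pos.2 h₃))
  have hε₁ : ε ≤ 1 / (k : ℚ) - min x (min y z) := min_le_left _ _
  have hε₂ : ε ≤ (a : ℚ) / k - median x y z := (min_le_right _ _).trans (min_le_left _ _)
  have hε₃ : ε ≤ ((k : ℚ) - a) / k - max x (max y z) :=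
    (min_le_right _ _).trans (min_le_right _ _)
  have hx : x < x + ε := lt_add_of_pos_right x hε
  have hy : y < y + ε := lt_add_of_pos_right y hε
  refine ⟨ε, hε, fun w hw => realizable_iff.mpr ⟨a, k, ha, hak, hcop, ?_, ?_, ?_⟩⟩
  · calc min x (min y w) < min (x + ε) (min (y + ε) (z + ε)) :=
          min_lt_min hx (min_lt_min hy hw)
      _ = min x (min y z) + ε := by rw [min_add_add_right, min_add_add_right]
      _ ≤ 1 / k := by linarith
  · calc median x y w < median (x + ε) (y + ε) (z + ε) := median_lt_median hx hy hw
      _ = median x y z + ε := median_add_right x y z ε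
      _ ≤ a / k := by linarith
  · calc max x (max y w) < max (x + ε) (max (y + ε) (z + ε)) :=
          max_lt_max hx (max_lt_max hy hw)
      _ = max x (max y z) + ε := by rw [max_add_add_right, max_add_add_right]
      _ ≤ (k - a) / k := by linarith

theorem non_lspace_minus_two_general (r₁ r₂ rinf : ℚ)
    (h : Realizable (1 - r₁) (1 - r₂) (1 - rinf)) :
    ∃ ε : ℚ, 0 < ε ∧ ∀ r : ℚ, rinf - ε < r → r < 1 →
      Realizable (1 - r₁) (1 - r₂) (1 - r) := by
  obtain ⟨ε, hε, hrealizable⟩ := h.exists_forall_lt_add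
  exact ⟨ε, hε, fun r hr _ => hrealizable (1 - r) (by linarith)⟩

/-- If `(1-r₁, 1-r₂, 1-r∞)` is realizable, then there is `ε > 0` such that
`(1-r₁, 1-r₂, 1-r)` is realizable for every `r∞ - ε < r < 1`. -/
theorem non_lspace_minus_two (r₁ r₂ rinf : ℚ)
    (h₁ : 0 < r₁) (h₁₂ : r₁ ≤ r₂) (h₂ : r₂ < 1)
    (hinf : 0 < rinf) (hinf' : rinf < 1)
    (h : Realizable (1 - r₁) (1 - r₂) (1 - rinf)) :
    ∃ ε : ℚ, 0 < ε ∧ ∀ r : ℚ, rinf - ε < r → r < 1 →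
      Realizable (1 - r₁) (1 - r₂) (1 - r) :=
  non_lspace_minus_two_general r₁ r₂ rinf h
end

section
/- For every integer n, one has 14n + 5 ≠ 0, the rational number (11n+4)/(14n+5) satisfies 0 < (11n+4)/(14n+5) < 1, and the triple ((11n+4)/(14n+5), 5/7, 1/2) is not realizable. (This is the statement that K_{n,0}(196n+71) = S²((11n+4)/(14n+5), -2/7, 1/2) = S²(-1, (11n+4)/(14n+5), 5/7, 1/2) is an L-space for every integer n.) -/
/-- For every integer `n`, `14n + 5 ≠ 0`, `0 < (11n+4)/(14n+5) < 1`, and the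
triple `((11n+4)/(14n+5), 5/7, 1/2)` is not realizable. -/
theorem Kn0_lspace (n : ℤ) :
    14 * n + 5 ≠ 0 ∧
    0 < (11 * (n : ℚ) + 4) / (14 * (n : ℚ) + 5) ∧
    (11 * (n : ℚ) + 4) / (14 * (n : ℚ) + 5) < 1 ∧
    ¬ Realizable ((11 * (n : ℚ) + 4) / (14 * (n : ℚ) + 5)) (5 / 7) (1 / 2) := by
  set r : ℚ := (11 * (n : ℚ) + 4) / (14 * (n : ℚ) + 5) with hr
  have key : 0 < r ∧ r < 1 ∧ (1 : ℚ) / 2 ≤ r := by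
    rcases le_or_gt 0 n with hn | hn
    · have hn' : (0 : ℚ) ≤ (n : ℚ) := by exact_mod_cast hn
      have hD : (0 : ℚ) < 14 * (n : ℚ) + 5 := by linarith
      refine ⟨div_pos (by linarith) hD, ?_, ?_⟩
      · rw [hr, div_lt_one hD]; linarith
      · rw [hr, le_div_iff₀ hD]; linarith
    · have hn1 : n ≤ -1 := by omega
      have hn' : (n : ℚ) ≤ -1 := by exact_mod_cast hn1
      have hD : 14 * (n : ℚ) + 5 < 0 := by linarith
      refine ⟨?_, ?_, ?_⟩
      · rw [hr]; exact div_pos_of_neg_of_neg (by linarith) hD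
      · rw [hr, div_lt_iff_of_neg hD]; linarith
      · rw [hr, le_div_iff_of_neg hD]; linarith
  obtain ⟨h0, h1, hhalf⟩ := key
  have hne : (14 : ℤ) * n + 5 ≠ 0 := by omega
  refine ⟨hne, h0, h1, ?_⟩
  rintro ⟨a, k, ha, hak, -, t₁, t₂, t₃, hmul, h12, h23, ht1, -, -⟩
  have hmem : t₁ ∈ ({r, 5 / 7, 1 / 2} : Multiset ℚ) := by
    rw [← hmul]; simp
  have ht1' : t₁ = r ∨ t₁ = 5 / 7 ∨ t₁ = 1 / 2 := by simpa using hmem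
  have hge : (1 : ℚ) / 2 ≤ t₁ := by
    rcases ht1' with h | h | h <;> rw [h] <;> first | linarith | norm_num
  have hk2 : (2 : ℕ) ≤ k := by omega
  have hk2' : (2 : ℚ) ≤ (k : ℚ) := by exact_mod_cast hk2
  have : (1 : ℚ) / (k : ℚ) ≤ 1 / 2 := one_div_le_one_div_of_le (by norm_num) hk2'
  linarith
end

section
/- For every integer n, one has 10n + 7 ≠ 0, the rational number (7n+5)/(10n+7) satisfies 0 < (7n+5)/(10n+7) < 1, and the triple ((7n+5)/(10n+7), 4/5, 1/2) is not realizable. (This is the statement that K_{0,n}(100n+71) = S²(-(3n+2)/(10n+7), 4/5, 1/2) = S²(-1, (7n+5)/(10n+7), 4/5, 1/2) is an L-space for every integer n.) -/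
/-- For every integer `n`, `10n + 7 ≠ 0`, `0 < (7n+5)/(10n+7) < 1`, and the
triple `((7n+5)/(10n+7), 4/5, 1/2)` is not realizable. -/
theorem K0n_lspace (n : ℤ) :
    10 * n + 7 ≠ 0 ∧
    0 < (7 * (n : ℚ) + 5) / (10 * (n : ℚ) + 7) ∧
    (7 * (n : ℚ) + 5) / (10 * (n : ℚ) + 7) < 1 ∧
    ¬ Realizable ((7 * (n : ℚ) + 5) / (10 * (n : ℚ) + 7)) (4 / 5) (1 / 2) := by
  have hd : 10 * n + 7 ≠ 0 := by omega
  set x : ℚ := (n : ℚ) with hx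
  -- basic inequalities on r = (7x+5)/(10x+7)
  have key : 0 < (7 * x + 5) / (10 * x + 7) ∧ (7 * x + 5) / (10 * x + 7) < 1 ∧
      (1 : ℚ) / 2 ≤ (7 * x + 5) / (10 * x + 7) := by
    rcases le_or_gt 0 n with hn | hn
    · have hx0 : (0 : ℚ) ≤ x := by rw [hx]; exact_mod_cast hn
      have hpos : (0 : ℚ) < 10 * x + 7 := by linarith
      refine ⟨div_pos (by linarith) hpos, ?_, ?_⟩
      · rw [div_lt_one hpos]; linarith
      · rw [le_div_iff₀ hpos]; linarith
    · have hx1 : x ≤ -1 := by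
        rw [hx]
        have h' : n ≤ -1 := by omega
        exact_mod_cast h'
      have hneg : 10 * x + 7 < 0 := by linarith
      refine ⟨?_, ?_, ?_⟩
      · exact div_pos_of_neg_of_neg (by linarith) hneg
      · rw [div_lt_iff_of_neg hneg]; linarith
      · rw [le_div_iff_of_neg hneg]; linarith
  obtain ⟨hpos, hlt1, hhalf⟩ := key
  refine ⟨hd, hpos, hlt1, ?_⟩
  rintro ⟨a, k, ha, hak, -, t₁, t₂, t₃, hms, h12, h23, h1, -, -⟩
  have hk2 : 2 ≤ k := by omega
  have hkQ : (2 : ℚ) ≤ (k : ℚ) := by exact_mod_cast hk2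
  have hinv : 1 / (k : ℚ) ≤ 1 / 2 := by
    apply one_div_le_one_div_of_le <;> linarith
  have ht1mem : t₁ ∈ ({(7 * x + 5) / (10 * x + 7), (4 : ℚ) / 5, (1 : ℚ) / 2} : Multiset ℚ) := by
    rw [← hms]; simp
  simp only [Multiset.insert_eq_cons, Multiset.mem_cons, Multiset.mem_singleton] at ht1mem
  have : (1:ℚ)/2 ≤ t₁ := by
    rcases ht1mem with h | h | h <;> simp only [h] <;> linarith
  linarith
end

section
/- Let m, p, n be integers with m ≤ -3, p ≥ 3 and n ≠ 0. Then mn + 1 ≠ 0, the rational numbers -n/(mn+1), (p+1)/(2p) and (p-2m-1)/(2p-4m) all lie strictly between 0 and 1, the sum (p+1)/(2p) + (p-2m-1)/(2p-4m) is greater than 1, and the triple (-n/(mn+1), (p+1)/(2p), (p-2m-1)/(2p-4m)) is not realizable. (This is the case m ≤ -3, n ≠ 0 of the statement that K_{m,p,n}(m_{p,n}) = S²(-1, -n/(mn+1), (p+1)/2p, (p-2m-1)/(2p-4m)) is an L-space.) -/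
theorem Realizable.add_lt_one {s₁ s₂ s₃ : ℚ} (h : Realizable s₁ s₂ s₃) : s₂ + s₃ < 1 := by
  obtain ⟨a, k, ha, hak, -, t₁, t₂, t₃, hperm, h12, h23, -, ht₂, ht₃⟩ := h
  have hk : (0 : ℚ) < k := by exact_mod_cast (by omega : 0 < k)
  have hsum : t₁ + (t₂ + t₃) = s₁ + (s₂ + s₃) := by
    simpa using congrArg Multiset.sum hperm
  have hmin : t₁ ≤ s₁ := by
    have hs₁ : s₁ ∈ ({t₁, t₂, t₃} : Multiset ℚ) := by rw [hperm]; simp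
    simp only [Multiset.insert_eq_cons, Multiset.mem_cons, Multiset.mem_singleton] at hs₁
    rcases hs₁ with rfl | rfl | rfl <;> linarith
  have hbound : (a : ℚ) / k + ((k : ℚ) - a) / k = 1 := by
    rw [← add_div, add_sub_cancel, div_self hk.ne']
  linarith

theorem neg_div_mul_add_one_mem_Ioo {m n : ℤ} (hm : m ≤ -3) (hn : n ≠ 0) :
    -(n : ℚ) / ((m : ℚ) * n + 1) ∈ Set.Ioo 0 1 := by
  have hm' : (m : ℚ) ≤ -3 := by exact_mod_cast hm
  rcases hn.lt_or_gt with hneg | hpos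
  · have hn' : (n : ℚ) ≤ -1 := by exact_mod_cast Int.le_sub_one_of_lt hneg
    have hden : (0 : ℚ) < m * n + 1 := by nlinarith
    exact ⟨div_pos (by linarith) hden, (div_lt_one hden).2 (by nlinarith)⟩
  · have hn' : (1 : ℚ) ≤ n := by exact_mod_cast hpos
    have hden : (m : ℚ) * n + 1 < 0 := by nlinarith
    exact ⟨div_pos_of_neg_of_neg (by linarith) hden, (div_lt_one_of_neg hden).2 (by nlinarith)⟩

theorem add_one_div_two_mul_mem_Ioo {p : ℚ} (hp : 1 < p) : (p + 1) / (2 * p) ∈ Set.Ioo 0 1 := by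
  have hden : 0 < 2 * p := by linarith
  exact ⟨div_pos (by linarith) hden, (div_lt_one hden).2 (by linarith)⟩

theorem sub_two_mul_sub_one_div_mem_Ioo {m p : ℚ} (h : 2 * m + 1 < p) :
    (p - 2 * m - 1) / (2 * p - 4 * m) ∈ Set.Ioo 0 1 := by
  have hden : 0 < 2 * p - 4 * m := by linarith
  exact ⟨div_pos (by linarith) hden, (div_lt_one hden).2 (by linarith)⟩

theorem one_lt_add_one_div_two_mul_add_sub_two_mul_sub_one_div {m p : ℚ} (hm : m < 0) (hp : 0 < p) :
    1 < (p + 1) / (2 * p) + (p - 2 * m - 1) / (2 * p - 4 * m) := by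
  have hden : 0 < 2 * p - 4 * m := by linarith
  rw [div_add_div _ _ (by positivity) hden.ne', lt_div_iff₀ (by positivity)]
  nlinarith

/-- The case `m ≤ -3`, `n ≠ 0` of the statement that
`K_{m,p,n}(m_{p,n}) = S²(-1, -n/(mn+1), (p+1)/2p, (p-2m-1)/(2p-4m))` is an L-space. -/
theorem Kmpn_lspace (m p n : ℤ) (hm : m ≤ -3) (hp : 3 ≤ p) (hn : n ≠ 0) :
    m * n + 1 ≠ 0 ∧
    (0 < -(n : ℚ) / ((m : ℚ) * n + 1) ∧ -(n : ℚ) / ((m : ℚ) * n + 1) < 1) ∧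
    (0 < ((p : ℚ) + 1) / (2 * p) ∧ ((p : ℚ) + 1) / (2 * p) < 1) ∧
    (0 < ((p : ℚ) - 2 * m - 1) / (2 * p - 4 * m) ∧
      ((p : ℚ) - 2 * m - 1) / (2 * p - 4 * m) < 1) ∧
    1 < ((p : ℚ) + 1) / (2 * p) + ((p : ℚ) - 2 * m - 1) / (2 * p - 4 * m) ∧
    ¬ Realizable (-(n : ℚ) / ((m : ℚ) * n + 1)) (((p : ℚ) + 1) / (2 * p))
      (((p : ℚ) - 2 * m - 1) / (2 * p - 4 * m)) := by
  have hm' : (m : ℚ) ≤ -3 := by exact_mod_cast hm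
  have hp' : (3 : ℚ) ≤ p := by exact_mod_cast hp
  have hfirst := neg_div_mul_add_one_mem_Ioo hm hn
  have hsum := one_lt_add_one_div_two_mul_add_sub_two_mul_sub_one_div
    (by linarith : (m : ℚ) < 0) (by linarith : (0 : ℚ) < p)
  -- a zero denominator would make the first entry `0` (as `x / 0 = 0`), not positive
  have hden : m * n + 1 ≠ 0 := by
    intro h
    have h' : (m : ℚ) * n + 1 = 0 := by exact_mod_cast h
    simp [h'] at hfirst
  exact ⟨hden, hfirst, add_one_div_two_mul_mem_Ioo (by linarith),
    sub_two_mul_sub_one_div_mem_Ioo (by linarith), hsum, fun h => h.add_lt_one.not_gt hsum⟩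
end

section
/- Let p and n be integers with p ≥ 3 and n ≤ -1. Then the rational number n/(n-1) satisfies 0 < n/(n-1) < 1, the sum (p+1)/(2p) + (p+1)/(2p+4) is greater than 1, and the triple (n/(n-1), (p+1)/(2p), (p+1)/(2p+4)) is not realizable. (This is the case m = -1, n < 0 of the statement that K_{m,p,n}(m_{p,n}) = S²(-1, n/(n-1), (p+1)/2p, (p+1)/(2p+4)) is an L-space.) -/
/-- The case `m = -1`, `n < 0` of the statement that
`K_{m,p,n}(m_{p,n}) = S²(-1, n/(n-1), (p+1)/2p, (p+1)/(2p+4))` is an L-space. -/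
theorem Km1pn_lspace (p n : ℤ) (hp : 3 ≤ p) (hn : n ≤ -1) :
    (0 < (n : ℚ) / ((n : ℚ) - 1) ∧ (n : ℚ) / ((n : ℚ) - 1) < 1) ∧
    1 < ((p : ℚ) + 1) / (2 * p) + ((p : ℚ) + 1) / (2 * p + 4) ∧
    ¬ Realizable ((n : ℚ) / ((n : ℚ) - 1)) (((p : ℚ) + 1) / (2 * p))
      (((p : ℚ) + 1) / (2 * p + 4)) := by
  have hq : (n : ℚ) ≤ -1 := by exact_mod_cast hn
  have hp' : (3 : ℚ) ≤ (p : ℚ) := by exact_mod_cast hp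
  have hd : (n : ℚ) - 1 < 0 := by linarith
  have hA : (0 : ℚ) < 2 * p := by linarith
  have hB : (0 : ℚ) < 2 * p + 4 := by linarith
  -- r1 ≥ 1/2
  have hr1 : (1 : ℚ) / 2 ≤ (n : ℚ) / ((n : ℚ) - 1) := by
    rw [le_div_iff_of_neg hd]; linarith
  -- r2 ≥ 1/2
  have hr2 : (1 : ℚ) / 2 ≤ ((p : ℚ) + 1) / (2 * p) := by
    rw [div_le_div_iff₀ (by norm_num) hA]; linarith
  -- r3 ≥ 2/5
  have hr3 : (2 : ℚ) / 5 ≤ ((p : ℚ) + 1) / (2 * p + 4) := by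
    rw [div_le_div_iff₀ (by norm_num) hB]; linarith
  refine ⟨⟨div_pos_of_neg_of_neg (by linarith) hd, ?_⟩, ?_, ?_⟩
  · rw [div_lt_one_of_neg hd]; linarith
  · rw [div_add_div _ _ hA.ne' hB.ne', lt_div_iff₀ (mul_pos hA hB)]
    ring_nf
    nlinarith
  · rintro ⟨a, k, ha, hak, -, t₁, t₂, t₃, hm, h12, h23, ht1, ht2, ht3⟩
    -- t₁ is one of the three values, hence t₁ ≥ 2/5
    have ht1mem : t₁ ∈ ({t₁, t₂, t₃} : Multiset ℚ) := by simp
    rw [hm] at ht1mem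
    simp only [Multiset.insert_eq_cons, Multiset.mem_cons, Multiset.mem_singleton] at ht1mem
    have ht1lb : (2 : ℚ) / 5 ≤ t₁ := by
      rcases ht1mem with h | h | h <;> rw [h] <;> linarith
    -- hence k ≤ 2, and 2 ≤ 2a ≤ k, so k = 2, a = 1
    have hk0 : 0 < k := by omega
    have hkQ : (0 : ℚ) < (k : ℚ) := by exact_mod_cast hk0
    have hk2 : (k : ℚ) < 5 / 2 := by
      have h15 : (2 : ℚ) / 5 < 1 / (k : ℚ) := lt_of_le_of_lt ht1lb ht1
      rw [div_lt_div_iff₀ (by norm_num) hkQ] at h15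
      linarith
    have hkle : k ≤ 2 := by
      by_contra h
      have : (3 : ℚ) ≤ (k : ℚ) := by exact_mod_cast (by omega : 3 ≤ k)
      linarith
    have hk : k = 2 := by omega
    have haeq : a = 1 := by omega
    subst hk haeq
    -- now all t's are < 1/2
    have ht3' : t₃ < 1 / 2 := by
      have : ((2 : ℕ) : ℚ) = 2 := by norm_num
      rw [this] at ht3
      norm_num at ht3
      linarith
    have ht2' : t₂ < 1 / 2 := by
      have : ((1 : ℕ) : ℚ) / ((2 : ℕ) : ℚ) = 1 / 2 := by norm_num
      rw [this] at ht2
      exact ht2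
    have ht1' : t₁ < 1 / 2 := lt_of_le_of_lt h12 ht2'
    -- but r1 ≥ 1/2 belongs to the multiset
    have hmem : (n : ℚ) / ((n : ℚ) - 1) ∈ ({t₁, t₂, t₃} : Multiset ℚ) := by
      rw [hm]; simp
    simp only [Multiset.insert_eq_cons, Multiset.mem_cons, Multiset.mem_singleton] at hmem
    rcases hmem with h | h | h <;> rw [h] at hr1 <;> linarith
end

section
/- Let p and n be integers with p ≥ 3 and n ∉ {0, 1}. Then 2n - 1 ≠ 0, the rational number n/(2n-1) satisfies 0 < n/(2n-1) < 1, the sum (p+1)/(2p) + (p+3)/(2p+8) is greater than 1, and the triple (n/(2n-1), (p+1)/(2p), (p+3)/(2p+8)) is not realizable. (This is the case m = -2, n ≠ 0, 1 of the statement that K_{m,p,n}(m_{p,n}) = S²(-1, n/(2n-1), (p+1)/2p, (p+3)/(2p+8)) is an L-space.) -/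
/-- The case `m = -2`, `n ≠ 0, 1` of the statement that
`K_{m,p,n}(m_{p,n}) = S²(-1, n/(2n-1), (p+1)/2p, (p+3)/(2p+8))` is an L-space. -/
theorem Km2pn_lspace (p n : ℤ) (hp : 3 ≤ p) (hn0 : n ≠ 0) (hn1 : n ≠ 1) :
    2 * n - 1 ≠ 0 ∧
    (0 < (n : ℚ) / (2 * (n : ℚ) - 1) ∧ (n : ℚ) / (2 * (n : ℚ) - 1) < 1) ∧
    1 < ((p : ℚ) + 1) / (2 * p) + ((p : ℚ) + 3) / (2 * p + 8) ∧
    ¬ Realizable ((n : ℚ) / (2 * (n : ℚ) - 1)) (((p : ℚ) + 1) / (2 * p))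
      (((p : ℚ) + 3) / (2 * p + 8)) := by
  have hpq : (3 : ℚ) ≤ (p : ℚ) := by exact_mod_cast hp
  have hd1 : (0 : ℚ) < 2 * p := by linarith
  have hd2 : (0 : ℚ) < 2 * p + 8 := by linarith
  -- n is ≥ 2 or ≤ -1
  have hn : 2 ≤ n ∨ n ≤ -1 := by omega
  have hnq : 2 ≤ (n : ℚ) ∨ (n : ℚ) ≤ -1 := by
    rcases hn with h | h
    · exact Or.inl (by exact_mod_cast h)
    · exact Or.inr (by exact_mod_cast h)
  -- bounds on r₁ := n/(2n-1)
  have hr1_pos : 0 < (n : ℚ) / (2 * (n : ℚ) - 1) := by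
    rcases hnq with h | h
    · apply div_pos <;> linarith
    · apply div_pos_of_neg_of_neg <;> linarith
  have hr1_lt1 : (n : ℚ) / (2 * (n : ℚ) - 1) < 1 := by
    rcases hnq with h | h
    · rw [div_lt_one (by linarith)]; linarith
    · rw [div_lt_one_of_neg (by linarith)]; linarith
  have hr1_ge : (1 : ℚ) / 3 ≤ (n : ℚ) / (2 * (n : ℚ) - 1) := by
    rcases hnq with h | h
    · rw [div_le_div_iff₀ (by norm_num) (by linarith)]; linarith
    · rw [le_div_iff_of_neg (by linarith : 2 * (n:ℚ) - 1 < 0)]; linarith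
  -- bounds on r₂ := (p+1)/(2p)
  have hr2_gt : (1 : ℚ) / 2 < ((p : ℚ) + 1) / (2 * p) := by
    rw [div_lt_div_iff₀ (by norm_num) hd1]; linarith
  -- bound on r₃
  have hr3_ge : (1 : ℚ) / 3 ≤ ((p : ℚ) + 3) / (2 * p + 8) := by
    rw [div_le_div_iff₀ (by norm_num) hd2]; linarith
  refine ⟨by omega, ⟨hr1_pos, hr1_lt1⟩, ?_, ?_⟩
  · rw [div_add_div _ _ (ne_of_gt hd1) (ne_of_gt hd2), lt_div_iff₀ (by positivity)]
    nlinarith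
  · rintro ⟨a, k, ha, hak, -, t₁, t₂, t₃, hmult, h12, h23, h1, h2, h3⟩
    have ht1mem : t₁ ∈ ({((n : ℚ) / (2 * (n : ℚ) - 1)), (((p : ℚ) + 1) / (2 * p)),
        (((p : ℚ) + 3) / (2 * p + 8))} : Multiset ℚ) := by
      rw [← hmult]; simp
    have hs2mem : (((p : ℚ) + 1) / (2 * p)) ∈ ({t₁, t₂, t₃} : Multiset ℚ) := by
      rw [hmult]; simp
    simp only [Multiset.insert_eq_cons, Multiset.mem_cons, Multiset.mem_singleton] at ht1mem hs2mem
    -- t₁ ≥ 1/3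
    have ht1ge : (1 : ℚ) / 3 ≤ t₁ := by
      rcases ht1mem with h | h | h <;> rw [h] <;> linarith
    -- hence k < 3, so k = 2, a = 1
    have hk2 : 0 < k := by omega
    have hkq : (0 : ℚ) < (k : ℚ) := by exact_mod_cast hk2
    have hklt : (k : ℚ) < 3 := by
      have h13 := lt_of_le_of_lt ht1ge h1
      rw [div_lt_div_iff₀ (by norm_num) hkq] at h13
      linarith
    have hk3 : k < 3 := by exact_mod_cast (by push_cast; linarith : (k : ℚ) < (3 : ℕ))
    have hkeq : k = 2 ∧ a = 1 := by omega
    obtain ⟨rfl, rfl⟩ := hkeq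
    -- t₃ < 1/2 but t₃ ≥ (p+1)/(2p) > 1/2
    have ht3 : t₃ < 1 / 2 := by norm_num at h3; linarith
    rcases hs2mem with h | h | h <;> linarith
end

section
/- Let m and p be integers with m ≤ -2 and p ≥ 3. Then the rational numbers -1/m, (p+1)/(2p) and (p-2m-1)/(2p-4m) all lie strictly between 0 and 1, the sum (p+1)/(2p) + (p-2m-1)/(2p-4m) is greater than 1, and the triple (-1/m, (p+1)/(2p), (p-2m-1)/(2p-4m)) is not realizable. (This is the statement that M_{c_{m,p}}(O, m) = S²(-1, -1/m, (p+1)/2p, (p-2m-1)/(2p-4m)) is an L-space for m < -1.) -/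
/-- The statement that `M_{c_{m,p}}(O, m) = S²(-1, -1/m, (p+1)/2p, (p-2m-1)/(2p-4m))`
is an L-space for `m ≤ -2`, `p ≥ 3`. -/
theorem Mcmp_lspace (m p : ℤ) (hm : m ≤ -2) (hp : 3 ≤ p) :
    (0 < -1 / (m : ℚ) ∧ -1 / (m : ℚ) < 1) ∧
    (0 < ((p : ℚ) + 1) / (2 * p) ∧ ((p : ℚ) + 1) / (2 * p) < 1) ∧
    (0 < ((p : ℚ) - 2 * m - 1) / (2 * p - 4 * m) ∧
      ((p : ℚ) - 2 * m - 1) / (2 * p - 4 * m) < 1) ∧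
    1 < ((p : ℚ) + 1) / (2 * p) + ((p : ℚ) - 2 * m - 1) / (2 * p - 4 * m) ∧
    ¬ Realizable (-1 / (m : ℚ)) (((p : ℚ) + 1) / (2 * p))
      (((p : ℚ) - 2 * m - 1) / (2 * p - 4 * m)) := by
  have hm : (m : ℚ) ≤ -2 := by exact_mod_cast hm
  have hp : (3 : ℚ) ≤ p := by exact_mod_cast hp
  have h2p : (0 : ℚ) < 2 * p := by linarith
  have hsum : ((p : ℚ) + 1) / (2 * p) + ((p : ℚ) - 2 * m - 1) / (2 * p - 4 * m)
      = 1 + 1 / (2 * p) - 1 / (2 * p - 4 * m) := by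
    have hp0 : (p : ℚ) ≠ 0 := by positivity
    have hpm : (p : ℚ) - 2 * m ≠ 0 := by linarith
    rw [show 2 * (p : ℚ) - 4 * m = 2 * (p - 2 * m) by ring]
    field_simp
    ring
  have hone_lt : 1 < ((p : ℚ) + 1) / (2 * p) + ((p : ℚ) - 2 * m - 1) / (2 * p - 4 * m) := by
    rw [hsum]
    linarith [one_div_lt_one_div_of_lt h2p (show 2 * (p : ℚ) < 2 * p - 4 * m by linarith)]
  refine ⟨⟨?_, ?_⟩, ⟨?_, ?_⟩, ⟨?_, ?_⟩, hone_lt, fun h ↦ hone_lt.not_gt h.add_lt_one⟩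
  · exact div_pos_of_neg_of_neg (by norm_num) (by linarith)
  · rw [div_lt_one_of_neg (by linarith)]; linarith
  · exact div_pos (by linarith) h2p
  · rw [div_lt_one h2p]; linarith
  · exact div_pos (by linarith) (by linarith)
  · rw [div_lt_one (by linarith)]; linarith
end
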